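/- Let r : {0,…,n−1} → [0,∞). Suppose (α,β) and (α',β') are two pairs of vectors in [0,1]^n × [0,1]^n such that ∑_j α(j) ≤ 1, ∑_j β(j) ≤ 1, ∑_j α'(j) ≤ 1, ∑_j β'(j) ≤ 1, and α(j) + β(j) = r(j) = α'(j) + β'(j) for all j. Then Φ(α,β) − Φ(α',β') ≤ 2, where Φ(α,β) = −∑_j α(j)·log₂ α(j) − ∑_j β(j)·log₂ β(j). -/

import Mathlib

/-!
With `h x = -x log x`, splitting a mass `s = a + b` gives `h a + h b = h s + s · H (a / s)`, where
`H` is the binary entropy and `0 ≤ H ≤ log 2`. Hence in each coordinate the entropy of the first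
pair exceeds that of the second by at most `α j + β j` bits, and summing gives at most
`∑ α + ∑ β ≤ 2`.
-/

/-- The pair entropy Φ(α,β) = −∑ α(j)·log₂ α(j) − ∑ β(j)·log₂ β(j). -/
noncomputable def pairEntropy {n : ℕ} (α β : Fin n → ℝ) : ℝ :=
  (-∑ j, α j * Real.logb 2 (α j)) - ∑ j, β j * Real.logb 2 (β j)

open Real Finset

namespace Real

lemma negMulLog_add_negMulLog (a b : ℝ) :
    negMulLog a + negMulLog b = negMulLog (a + b) + (a + b) * binEntropy (a / (a + b)) := by
  rcases eq_or_ne (a + b) 0 with hs | hs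
  · obtain rfl : b = -a := by linarith
    simp [negMulLog, log_neg_eq_log]
  have ha : negMulLog a = a / (a + b) * negMulLog (a + b) + (a + b) * negMulLog (a / (a + b)) := by
    rw [← negMulLog_mul, mul_div_cancel₀ _ hs]
  have hb : negMulLog b =
      (1 - a / (a + b)) * negMulLog (a + b) + (a + b) * negMulLog (1 - a / (a + b)) := by
    rw [← negMulLog_mul, mul_one_sub, mul_div_cancel₀ _ hs, add_sub_cancel_left]
  rw [ha, hb, binEntropy_eq_negMulLog_add_negMulLog_one_sub]
  ring

lemma negMulLog_add_le {a b : ℝ} (ha : 0 ≤ a) (hb : 0 ≤ b) :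
    negMulLog (a + b) ≤ negMulLog a + negMulLog b := by
  rw [negMulLog_add_negMulLog, le_add_iff_nonneg_right]
  have hp₁ : a / (a + b) ≤ 1 := div_le_one_of_le₀ (by linarith) (by positivity)
  exact mul_nonneg (by positivity) (binEntropy_nonneg (by positivity) hp₁)

lemma negMulLog_add_negMulLog_le {a b : ℝ} (ha : 0 ≤ a) (hb : 0 ≤ b) :
    negMulLog a + negMulLog b ≤ negMulLog (a + b) + (a + b) * log 2 := by
  rw [negMulLog_add_negMulLog]
  gcongr
  exact binEntropy_le_log_two

end Real

lemma pairEntropy_eq_sum_div_log_two {n : ℕ} (α β : Fin n → ℝ) :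
    pairEntropy α β = (∑ j, (negMulLog (α j) + negMulLog (β j))) / log 2 := by
  rw [pairEntropy, sum_div, ← sum_neg_distrib, ← sum_sub_distrib]
  refine sum_congr rfl fun j _ => ?_
  simp only [negMulLog, logb]
  ring

lemma negMulLog_add_negMulLog_sub_le {a b a' b' : ℝ} (ha : 0 ≤ a) (hb : 0 ≤ b) (ha' : 0 ≤ a')
    (hb' : 0 ≤ b') (h : a' + b' = a + b) :
    negMulLog a + negMulLog b - (negMulLog a' + negMulLog b') ≤ (a + b) * log 2 := by
  have hsplit := negMulLog_add_negMulLog_le ha hb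
  have hmerge := negMulLog_add_le ha' hb'
  rw [h] at hmerge
  linarith

lemma pairEntropy_sub_le {n : ℕ} {α β α' β' : Fin n → ℝ} (hα : ∀ j, 0 ≤ α j) (hβ : ∀ j, 0 ≤ β j)
    (hα' : ∀ j, 0 ≤ α' j) (hβ' : ∀ j, 0 ≤ β' j) (h : ∀ j, α' j + β' j = α j + β j) :
    pairEntropy α β - pairEntropy α' β' ≤ ∑ j, α j + ∑ j, β j := by
  have hlog : 0 < log 2 := log_pos one_lt_two
  rw [pairEntropy_eq_sum_div_log_two, pairEntropy_eq_sum_div_log_two, ← sub_div, ← sum_sub_distrib,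
    div_le_iff₀ hlog, ← sum_add_distrib, sum_mul]
  exact sum_le_sum fun j _ =>
    negMulLog_add_negMulLog_sub_le (hα j) (hβ j) (hα' j) (hβ' j) (h j)

theorem pairEntropy_diff_le_two_general {n : ℕ} (r α β α' β' : Fin n → ℝ)
    (hα0 : ∀ j, 0 ≤ α j)
    (hβ0 : ∀ j, 0 ≤ β j)
    (hα'0 : ∀ j, 0 ≤ α' j)
    (hβ'0 : ∀ j, 0 ≤ β' j)
    (hαsum : ∑ j, α j ≤ 1) (hβsum : ∑ j, β j ≤ 1)
    (hr1 : ∀ j, α j + β j = r j) (hr2 : ∀ j, α' j + β' j = r j) :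
    pairEntropy α β - pairEntropy α' β' ≤ 2 := by
  have h := pairEntropy_sub_le hα0 hβ0 hα'0 hβ'0 fun j => (hr2 j).trans (hr1 j).symm
  linarith

theorem pairEntropy_diff_le_two {n : ℕ} (r α β α' β' : Fin n → ℝ)
    (hr : ∀ j, 0 ≤ r j)
    (hα0 : ∀ j, 0 ≤ α j) (hα1 : ∀ j, α j ≤ 1)
    (hβ0 : ∀ j, 0 ≤ β j) (hβ1 : ∀ j, β j ≤ 1)
    (hα'0 : ∀ j, 0 ≤ α' j) (hα'1 : ∀ j, α' j ≤ 1)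
    (hβ'0 : ∀ j, 0 ≤ β' j) (hβ'1 : ∀ j, β' j ≤ 1)
    (hαsum : ∑ j, α j ≤ 1) (hβsum : ∑ j, β j ≤ 1)
    (hα'sum : ∑ j, α' j ≤ 1) (hβ'sum : ∑ j, β' j ≤ 1)
    (hr1 : ∀ j, α j + β j = r j) (hr2 : ∀ j, α' j + β' j = r j) :
    pairEntropy α β - pairEntropy α' β' ≤ 2 :=
  pairEntropy_diff_le_two_general r α β α' β' hα0 hβ0 hα'0 hβ'0 hαsum hβsum hr1 hr2
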